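/- arXiv:1809.07772 — 2 statements merged into one kernel-verified Lean document; each statement's English description precedes it below -/
import Mathlib

section
/- If a bipartite density matrix ρ on ℂ^{d_A} ⊗ ℂ^{d_B} is separable, i.e., ρ = Σᵢ pᵢ ρᵢ^A ⊗ ρᵢ^B with pᵢ > 0 summing to 1 and ρᵢ^A, ρᵢ^B density matrices, then its partial transpose ρ^{T_B} is positive semidefinite, and hence the negativity N(ρ) = 0. -/
open Matrix
open scoped Kronecker ComplexOrder

/-- The partial transpose on the second tensor factor. -/
def ptB {dA dB : ℕ} (ρ : Matrix (Fin dA × Fin dB) (Fin dA × Fin dB) ℂ) :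
    Matrix (Fin dA × Fin dB) (Fin dA × Fin dB) ℂ :=
  Matrix.of fun p q => ρ (p.1, q.2) (q.1, p.2)

/-- The trace norm `‖X‖₁ = Tr √(X†X)` (real part of the trace). -/
noncomputable def traceNorm {α : Type*} [Fintype α] [DecidableEq α]
    (X : Matrix α α ℂ) : ℝ :=
  ((Matrix.posSemidef_conjTranspose_mul_self X).1.eigenvectorUnitary.1 *
      diagonal (((↑) : ℝ → ℂ) ∘ (√·) ∘ (Matrix.posSemidef_conjTranspose_mul_self X).1.eigenvalues) *
      (star (Matrix.posSemidef_conjTranspose_mul_self X).1.eigenvectorUnitary :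
        Matrix α α ℂ)).trace.re

/-- The negativity `N(ρ) = (‖ρ^{T_B}‖₁ − 1)/2`. -/
noncomputable def negativity {dA dB : ℕ}
    (ρ : Matrix (Fin dA × Fin dB) (Fin dA × Fin dB) ℂ) : ℝ :=
  (traceNorm (ptB ρ) - 1) / 2

/-!
The partial transpose is linear and sends `A ⊗ B` to `A ⊗ Bᵀ`, so it maps the separable state
`∑ pᵢ ρᵢᴬ ⊗ ρᵢᴮ` to `∑ pᵢ ρᵢᴬ ⊗ (ρᵢᴮ)ᵀ`, a nonnegative combination of Kronecker products of
positive semidefinite matrices. It also preserves the trace, so `ρ^{T_B}` is a density matrix,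
and for a positive semidefinite `X` we have `√(XᴴX) = √(X²) = X`, whence `‖ρ^{T_B}‖₁ = 1`.
-/

section PartialTranspose

variable {dA dB : ℕ}

lemma ptB_sum {ι : Type*} (s : Finset ι) (ρ : ι → Matrix (Fin dA × Fin dB) (Fin dA × Fin dB) ℂ) :
    ptB (∑ i ∈ s, ρ i) = ∑ i ∈ s, ptB (ρ i) := by
  ext
  simp only [ptB, of_apply, Matrix.sum_apply]

lemma ptB_smul (c : ℂ) (ρ : Matrix (Fin dA × Fin dB) (Fin dA × Fin dB) ℂ) :
    ptB (c • ρ) = c • ptB ρ :=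
  rfl

lemma ptB_kronecker (A : Matrix (Fin dA) (Fin dA) ℂ) (B : Matrix (Fin dB) (Fin dB) ℂ) :
    ptB (A ⊗ₖ B) = A ⊗ₖ Bᵀ :=
  rfl

lemma trace_ptB (ρ : Matrix (Fin dA × Fin dB) (Fin dA × Fin dB) ℂ) :
    (ptB ρ).trace = ρ.trace :=
  rfl

end PartialTranspose

section TraceNorm

variable {α : Type*} [Fintype α] [DecidableEq α]

lemma traceNorm_eq_re_trace_cfc_sqrt (X : Matrix α α ℂ) :
    traceNorm X = (cfc Real.sqrt (Xᴴ * X)).trace.re := by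
  rw [traceNorm, (posSemidef_conjTranspose_mul_self X).1.cfc_eq, IsHermitian.cfc,
    Unitary.conjStarAlgAut_apply]
  rfl

lemma Matrix.PosSemidef.cfc_sqrt_conjTranspose_mul_self {X : Matrix α α ℂ} (hX : X.PosSemidef) :
    cfc Real.sqrt (Xᴴ * X) = X := by
  have hsa : IsSelfAdjoint X := hX.1
  have hsq : cfc (· ^ 2 : ℝ → ℝ) X = Xᴴ * X := by
    rw [cfc_pow_id X 2 hsa, pow_two, hX.1.eq]
  rw [← hsq, ← cfc_comp Real.sqrt (· ^ 2) X]
  conv_rhs => rw [← cfc_id ℝ X hsa]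
  refine cfc_congr fun x hx => ?_
  obtain ⟨i, rfl⟩ := hX.1.spectrum_real_eq_range_eigenvalues ▸ hx
  exact Real.sqrt_sq (hX.eigenvalues_nonneg i)

lemma Matrix.PosSemidef.traceNorm_eq {X : Matrix α α ℂ} (hX : X.PosSemidef) :
    traceNorm X = X.trace.re := by
  rw [traceNorm_eq_re_trace_cfc_sqrt, hX.cfc_sqrt_conjTranspose_mul_self]

end TraceNorm

/-- If a bipartite density matrix `ρ` is separable,
`ρ = Σᵢ pᵢ ρᵢ^A ⊗ ρᵢ^B`, then its partial transpose is positive semidefinite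
and its negativity vanishes. -/
theorem separable_ptB_posSemidef_negativity_zero (dA dB : ℕ)
    (ι : Type*) [Fintype ι] (p : ι → ℝ)
    (ρA : ι → Matrix (Fin dA) (Fin dA) ℂ)
    (ρB : ι → Matrix (Fin dB) (Fin dB) ℂ)
    (hp : ∀ i, 0 < p i) (hsum : ∑ i, p i = 1)
    (hApsd : ∀ i, (ρA i).PosSemidef) (hAtr : ∀ i, (ρA i).trace = 1)
    (hBpsd : ∀ i, (ρB i).PosSemidef) (hBtr : ∀ i, (ρB i).trace = 1)
    (ρ : Matrix (Fin dA × Fin dB) (Fin dA × Fin dB) ℂ)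
    (hsep : ρ = ∑ i, ((p i : ℂ)) • (ρA i ⊗ₖ ρB i)) :
    (ptB ρ).PosSemidef ∧ negativity ρ = 0 := by
  have hptB : ptB ρ = ∑ i, (p i : ℂ) • (ρA i ⊗ₖ (ρB i)ᵀ) := by
    simp only [hsep, ptB_sum, ptB_smul, ptB_kronecker]
  have hpsd : (ptB ρ).PosSemidef := by
    rw [hptB]
    exact posSemidef_sum _ fun i _ =>
      ((hApsd i).kronecker (hBpsd i).transpose).smul (Complex.zero_le_real.mpr (hp i).le)
  have htr : (ptB ρ).trace = 1 := by
    simp only [trace_ptB, hsep, trace_sum, trace_smul, trace_kronecker, hAtr, hBtr, mul_one,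
      smul_eq_mul]
    exact_mod_cast hsum
  refine ⟨hpsd, ?_⟩
  rw [negativity, hpsd.traceNorm_eq, htr]
  norm_num
end

section
/- Let |ψ⟩ ∈ ℂ^{d_A} ⊗ ℂ^{d_B} be a unit vector with Schmidt rank r and σ = |ψ⟩⟨ψ|. Then the matrix rank of the partial transpose σ^{T_B} is r². Consequently, σ^{T_B} is invertible if and only if r = d_A = d_B. -/
open Matrix

/-!
Write `sₖ = √cₖ`. Expanding `σ = |ψ⟩⟨ψ|` and transposing the second factor gives
`σ^{T_B} = Σ_{k,l} sₖ sₗ (aₖ ⊗ b̄ₗ)(aₗ ⊗ b̄ₖ)^*`, that is `σ^{T_B} = W S W^*`, where the columns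
`aₖ ⊗ b̄ₗ` of `W` are orthonormal and `S` is the positive diagonal matrix `(sₖ sₗ)` composed with the
swap `(k, l) ↦ (l, k)`. Since `W^* W = 1`, conjugation by `W` preserves rank, so the rank is
`rank S = r²`. Orthonormality also gives `r ≤ d_A` and `r ≤ d_B`, and `σ^{T_B}` is invertible iff
its rank `r²` equals `d_A d_B`, which forces `r = d_A = d_B` because `r > 0` (the `cₖ` sum to 1).
-/

open ComplexConjugate Kronecker

namespace Matrix

section Field

variable {K : Type*} [Field K] {l m n p : Type*} [Fintype l] [Fintype m] [Fintype n] [Fintype p]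

theorem rank_mul_mul_eq_of_mul_eq_one [DecidableEq n] [DecidableEq l] {W : Matrix m n K}
    {L : Matrix n m K} {V : Matrix l p K} {R : Matrix p l K} (hL : L * W = 1) (hR : V * R = 1)
    (S : Matrix n l K) : (W * S * V).rank = S.rank := by
  refine le_antisymm ((rank_mul_le_left _ _).trans (rank_mul_le_right _ _)) ?_
  have hS : S = L * (W * S * V) * R := by
    rw [Matrix.mul_assoc, Matrix.mul_assoc, hR, ← Matrix.mul_assoc, ← Matrix.mul_assoc, hL,
      Matrix.one_mul, Matrix.mul_one]
  calc S.rank = (L * (W * S * V) * R).rank := by rw [← hS]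
    _ ≤ (L * (W * S * V)).rank := rank_mul_le_left _ _
    _ ≤ (W * S * V).rank := rank_mul_le_right _ _

theorem card_le_card_of_mul_eq_one [DecidableEq n] {W : Matrix m n K} {L : Matrix n m K}
    (hL : L * W = 1) : Fintype.card n ≤ Fintype.card m :=
  calc Fintype.card n = (L * W).rank := by rw [hL, rank_one]
    _ ≤ W.rank := rank_mul_le_right _ _
    _ ≤ Fintype.card m := rank_le_card_height _

theorem isUnit_iff_rank_eq_card [DecidableEq n] {A : Matrix n n K} :
    IsUnit A ↔ A.rank = Fintype.card n := by
  refine ⟨rank_of_isUnit A, fun h => linearIndependent_rows_iff_isUnit.mp ?_⟩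
  rw [linearIndependent_iff_card_eq_finrank_span, Set.finrank, ← rank_eq_finrank_span_row, h]

end Field

theorem conjTranspose_kronecker_mul_kronecker_eq_one {R l m n p : Type*} [CommSemiring R]
    [StarRing R] [Fintype l] [Fintype n] [DecidableEq m] [DecidableEq p]
    {A : Matrix l m R} {B : Matrix n p R} (hA : Aᴴ * A = 1) (hB : Bᴴ * B = 1) :
    (A ⊗ₖ B)ᴴ * (A ⊗ₖ B) = 1 := by
  rw [conjTranspose_kronecker, ← mul_kronecker_mul, hA, hB, one_kronecker_one]

theorem transpose_conjTranspose_mul_transpose_eq_one {m d : Type*} [Fintype d] [DecidableEq m]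
    (v : m → d → ℂ) (hv : ∀ k l, ∑ i, conj (v k i) * v l i = if k = l then 1 else 0) :
    (of v)ᵀᴴ * (of v)ᵀ = 1 := by
  ext k l
  simpa [mul_apply, one_apply] using hv k l

end Matrix

theorem ptB_eq_mul_mul_conjTranspose {dA dB : ℕ} {m : Type*} [Fintype m] [DecidableEq m]
    (s : m → ℂ) (a : m → Fin dA → ℂ) (b : m → Fin dB → ℂ) :
    ptB (of fun q q' =>
        (∑ k, s k * a k q.1 * b k q.2) * conj (∑ k, s k * a k q'.1 * b k q'.2)) =
      ((of a)ᵀ ⊗ₖ (of fun l j => conj (b l j))ᵀ) *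
        (diagonal fun kl => s kl.1 * conj (s kl.2)).submatrix id Prod.swap *
        ((of a)ᵀ ⊗ₖ (of fun l j => conj (b l j))ᵀ)ᴴ := by
  ext p q
  simp only [ptB, map_sum, map_mul, Finset.sum_mul_sum, of_apply, diagonal, mul_apply,
    kroneckerMap_apply, transpose_apply, submatrix_apply, id_eq, mul_ite, mul_zero,
    Finset.sum_ite_eq', Finset.mem_univ, ↓reduceIte, Prod.fst_swap, Prod.snd_swap,
    conjTranspose_apply, star_mul', RCLike.star_def, RingHomCompTriple.comp_apply,
    RingHom.id_apply, Fintype.sum_prod_type]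
  exact Finset.sum_comm.trans
    (Finset.sum_congr rfl fun k _ => Finset.sum_congr rfl fun l _ => by ring)

/-- For a unit vector `ψ ∈ ℂ^{d_A} ⊗ ℂ^{d_B}` with Schmidt decomposition
`ψ = Σₖ √λₖ aₖ ⊗ bₖ` of Schmidt rank `r` and `σ = |ψ⟩⟨ψ|`, the matrix rank of
the partial transpose `σ^{T_B}` is `r²`; consequently `σ^{T_B}` is invertible
iff `r = d_A = d_B`. -/
theorem schmidt_rank_ptB (dA dB r : ℕ) (c : Fin r → ℝ)
    (a : Fin r → Fin dA → ℂ) (b : Fin r → Fin dB → ℂ)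
    (hc : ∀ k, 0 < c k) (hsum : ∑ k, c k = 1)
    (ha : ∀ k l, (∑ i, (starRingEnd ℂ) (a k i) * a l i) =
      if k = l then 1 else 0)
    (hb : ∀ k l, (∑ j, (starRingEnd ℂ) (b k j) * b l j) =
      if k = l then 1 else 0)
    (ψ : Fin dA × Fin dB → ℂ)
    (hψ : ψ = fun q => ∑ k, (Real.sqrt (c k) : ℂ) * a k q.1 * b k q.2)
    (σ : Matrix (Fin dA × Fin dB) (Fin dA × Fin dB) ℂ)
    (hσ : σ = Matrix.of fun q q' => ψ q * (starRingEnd ℂ) (ψ q')) :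
    (ptB σ).rank = r * r ∧ (IsUnit (ptB σ) ↔ (r = dA ∧ r = dB)) := by
  have hr : 0 < r := Nat.pos_of_ne_zero (by rintro rfl; simp at hsum)
  have ha' := transpose_conjTranspose_mul_transpose_eq_one a ha
  have hb' := transpose_conjTranspose_mul_transpose_eq_one (fun l j => conj (b l j))
    (fun k l => by simpa [mul_comm, eq_comm] using hb l k)
  have hW := conjTranspose_kronecker_mul_kronecker_eq_one ha' hb'
  have hS : ((diagonal fun kl : Fin r × Fin r =>
      (Real.sqrt (c kl.1) : ℂ) * conj (Real.sqrt (c kl.2) : ℂ)).submatrix id Prod.swap).rank =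
      r * r := by
    rw [← Equiv.coe_refl, ← Equiv.coe_prodComm, rank_submatrix, rank_diagonal]
    simp [Real.sqrt_eq_zero', not_le.mpr (hc _)]
  have hrank : (ptB σ).rank = r * r := by
    rw [hσ, hψ, ptB_eq_mul_mul_conjTranspose, rank_mul_mul_eq_of_mul_eq_one hW hW, hS]
  have hrA : r ≤ dA := by simpa using card_le_card_of_mul_eq_one ha'
  have hrB : r ≤ dB := by simpa using card_le_card_of_mul_eq_one hb'
  refine ⟨hrank, ?_⟩
  rw [isUnit_iff_rank_eq_card, hrank, Fintype.card_prod, Fintype.card_fin, Fintype.card_fin]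
  constructor
  · intro h
    constructor <;> nlinarith
  · rintro ⟨rfl, rfl⟩
    rfl
end
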